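/- arXiv:1707.04246 — 5 statements merged into one kernel-verified Lean document; each statement's English description precedes it below -/
import Mathlib

section
/- For every bounded self-adjoint non-negative linear operator B : X → X and every δ ∈ ℝ, the operator K(B,δ) = C₀A*(Γ + δ²MBM* + AC₀A*)⁻¹ : Y → X satisfies the operator-norm bound ‖K(B,δ)‖ ≤ ‖C₀‖·‖A‖·‖(Γ + AC₀A*)⁻¹‖; in particular the family K(B,δ) is bounded uniformly over all such B and all δ ∈ ℝ. -/
open ContinuousLinearMap
open scoped RealInnerProductSpace

section Aux

variable {Y : Type*} [NormedAddCommGroup Y] [InnerProductSpace ℝ Y]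

/-- real inner nonneg from IsPositive -/
lemma isPos_inner_nonneg [CompleteSpace Y] {S : Y →L[ℝ] Y} (hS : S.IsPositive) (x : Y) :
    0 ≤ ⟪S x, x⟫ := by
  simpa using hS.inner_nonneg_left x

/-- symmetry for positive operators over ℝ -/
lemma isPos_inner_symm [CompleteSpace Y] {S : Y →L[ℝ] Y} (hS : S.IsPositive) (u v : Y) :
    ⟪S u, v⟫ = ⟪S v, u⟫ := by
  have h := hS.isSelfAdjoint
  rw [ContinuousLinearMap.isSelfAdjoint_iff'] at h
  calc ⟪S u, v⟫ = ⟪u, S v⟫ := by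
        conv_lhs => rw [← h]
        rw [ContinuousLinearMap.adjoint_inner_left]
    _ = ⟪S v, u⟫ := real_inner_comm _ _

/-- Cauchy–Schwarz for a positive operator. -/
lemma isPos_cauchy_schwarz [CompleteSpace Y] {S : Y →L[ℝ] Y} (hS : S.IsPositive) (u v : Y) :
    ⟪S u, v⟫ ^ 2 ≤ ⟪S u, u⟫ * ⟪S v, v⟫ := by
  have key : ∀ t : ℝ,
      0 ≤ ⟪S v, v⟫ * (t * t) + (2 * ⟪S u, v⟫) * t + ⟪S u, u⟫ := by
    intro t
    have h0 : 0 ≤ ⟪S (t • v + u), t • v + u⟫ := isPos_inner_nonneg hS _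
    have hexp : ⟪S (t • v + u), t • v + u⟫
        = ⟪S v, v⟫ * (t * t) + (2 * ⟪S u, v⟫) * t + ⟪S u, u⟫ := by
      simp only [map_add, map_smul, inner_add_left, inner_add_right, real_inner_smul_left,
        real_inner_smul_right]
      linear_combination t * (isPos_inner_symm hS v u)
    linarith [hexp ▸ h0]
  have hd := discrim_le_zero key
  rw [discrim] at hd
  nlinarith [hd]

end Aux

section Key

variable {Y : Type*} [NormedAddCommGroup Y] [InnerProductSpace ℝ Y] [FiniteDimensional ℝ Y]

lemma isUnit_of_posdef {T : Y →L[ℝ] Y} (hTpos : ∀ y : Y, y ≠ 0 → 0 < ⟪T y, y⟫) :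
    IsUnit T := by
  haveI : CompleteSpace Y := FiniteDimensional.complete ℝ Y
  rw [ContinuousLinearMap.isUnit_iff_bijective]
  have hker : ∀ m : Y, T m = 0 → m = 0 := by
    intro m hm
    by_contra hm0
    have := hTpos m hm0
    rw [hm] at this
    simp at this
  have hinj : Function.Injective T := by
    intro p q h
    have h1 : T (p - q) = 0 := by rw [map_sub, h, sub_self]
    exact sub_eq_zero.mp (hker _ h1)
  exact ⟨hinj, (LinearMap.injective_iff_surjective (f := T.toLinearMap)).mp hinj⟩

/-- Key monotonicity: if `S ≤ T` in form sense, both positive definite, `S` positive,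
then `‖T⁻¹‖ ≤ ‖S⁻¹‖`. -/
lemma inverse_norm_le {S T : Y →L[ℝ] Y} (hS : S.IsPositive)
    (hSpos : ∀ y : Y, y ≠ 0 → 0 < ⟪S y, y⟫)
    (hTpos : ∀ y : Y, y ≠ 0 → 0 < ⟪T y, y⟫)
    (hST : ∀ y : Y, ⟪S y, y⟫ ≤ ⟪T y, y⟫) :
    ‖Ring.inverse T‖ ≤ ‖Ring.inverse S‖ := by
  haveI : CompleteSpace Y := FiniteDimensional.complete ℝ Y
  have hTunit := isUnit_of_posdef hTpos
  have hSunit := isUnit_of_posdef hSpos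
  set S' := Ring.inverse S with hS'
  set T' := Ring.inverse T with hT'
  refine ContinuousLinearMap.opNorm_le_bound _ (norm_nonneg _) fun y => ?_
  set x := T' y with hx
  have hTx : T x = y := by
    have h1 : (T * T') y = y := by rw [Ring.mul_inverse_cancel T hTunit]; simp
    simpa [ContinuousLinearMap.mul_apply] using h1
  by_cases hx0 : x = 0
  · rw [hx0]
    simpa using mul_nonneg (norm_nonneg S') (norm_nonneg y)
  · have hn : (0:ℝ) < ‖x‖ := norm_pos_iff.mpr hx0
    have hSSx : S (S' x) = x := by
      have h1 : (S * S') x = x := by rw [Ring.mul_inverse_cancel S hSunit]; simp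
      simpa [ContinuousLinearMap.mul_apply] using h1
    have cs := isPos_cauchy_schwarz hS (S' x) x
    rw [hSSx] at cs
    -- cs : ⟪x, x⟫ ^ 2 ≤ ⟪x, S' x⟫ * ⟪S x, x⟫
    have e1 : ⟪x, x⟫ = ‖x‖ ^ 2 := real_inner_self_eq_norm_sq x
    have e2 : ⟪x, S' x⟫ ≤ ‖S'‖ * ‖x‖ ^ 2 := by
      calc ⟪x, S' x⟫ ≤ ‖x‖ * ‖S' x‖ := real_inner_le_norm _ _
        _ ≤ ‖x‖ * (‖S'‖ * ‖x‖) := by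
            exact mul_le_mul_of_nonneg_left (S'.le_opNorm x) (norm_nonneg x)
        _ = ‖S'‖ * ‖x‖ ^ 2 := by ring
    have e3 : ⟪S x, x⟫ ≤ ‖y‖ * ‖x‖ := by
      calc ⟪S x, x⟫ ≤ ⟪T x, x⟫ := hST x
        _ = ⟪y, x⟫ := by rw [hTx]
        _ ≤ ‖y‖ * ‖x‖ := real_inner_le_norm _ _
    have hSx_nonneg : 0 ≤ ⟪S x, x⟫ := isPos_inner_nonneg hS x
    have h4 : ‖x‖ ^ 2 * ‖x‖ ^ 2 ≤ (‖S'‖ * ‖x‖ ^ 2) * (‖y‖ * ‖x‖) := by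
      calc ‖x‖ ^ 2 * ‖x‖ ^ 2 = ⟪x, x⟫ ^ 2 := by rw [e1]; ring
        _ ≤ ⟪x, S' x⟫ * ⟪S x, x⟫ := cs
        _ ≤ (‖S'‖ * ‖x‖ ^ 2) * ⟪S x, x⟫ := mul_le_mul_of_nonneg_right e2 hSx_nonneg
        _ ≤ (‖S'‖ * ‖x‖ ^ 2) * (‖y‖ * ‖x‖) := by
            exact mul_le_mul_of_nonneg_left e3
              (mul_nonneg (norm_nonneg _) (sq_nonneg _))
    nlinarith [h4, mul_pos (mul_pos hn hn) hn]

end Key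

/-- The operator `K(B,δ) = C₀ A* (Γ + δ² M B M* + A C₀ A*)⁻¹ : Y → X`. -/
noncomputable def Kop {X Y : Type*}
    [NormedAddCommGroup X] [InnerProductSpace ℝ X] [CompleteSpace X]
    [NormedAddCommGroup Y] [InnerProductSpace ℝ Y] [FiniteDimensional ℝ Y]
    (A M : X →L[ℝ] Y) (C₀ : X →L[ℝ] X) (Γ : Y →L[ℝ] Y)
    (B : X →L[ℝ] X) (δ : ℝ) : Y →L[ℝ] X :=
  C₀ ∘L (adjoint A) ∘L
    Ring.inverse (Γ + δ ^ 2 • (M ∘L B ∘L adjoint M) + A ∘L C₀ ∘L adjoint A)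

/-- For every bounded self-adjoint non-negative `B : X → X` and every `δ ∈ ℝ`, the operator
`K(B,δ)` satisfies `‖K(B,δ)‖ ≤ ‖C₀‖·‖A‖·‖(Γ + A C₀ A*)⁻¹‖`; in particular the family `K(B,δ)`
is bounded uniformly over all such `B` and all `δ`. -/
theorem stmt_0 {X Y : Type*}
    [NormedAddCommGroup X] [InnerProductSpace ℝ X] [CompleteSpace X]
    [NormedAddCommGroup Y] [InnerProductSpace ℝ Y] [FiniteDimensional ℝ Y]
    (A M : X →L[ℝ] Y) (C₀ : X →L[ℝ] X) (Γ : Y →L[ℝ] Y)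
    (hC₀ : C₀.IsPositive) (hΓ : Γ.IsPositive)
    (hΓpos : ∀ y : Y, y ≠ 0 → 0 < ⟪Γ y, y⟫)
    (B : X →L[ℝ] X) (hB : B.IsPositive) (δ : ℝ) :
    ‖Kop A M C₀ Γ B δ‖ ≤
      ‖C₀‖ * ‖A‖ * ‖Ring.inverse (Γ + A ∘L C₀ ∘L adjoint A)‖ := by
  haveI : CompleteSpace Y := FiniteDimensional.complete ℝ Y
  set P := A ∘L C₀ ∘L adjoint A with hPdef
  set Q := M ∘L B ∘L adjoint M with hQdef
  set S := Γ + P with hSdef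
  set T := Γ + δ ^ 2 • Q + P with hTdef
  have hP : P.IsPositive := hC₀.conj_adjoint A
  have hQ : Q.IsPositive := hB.conj_adjoint M
  have hSpos' : S.IsPositive := hΓ.add hP
  have hQy : ∀ y : Y, 0 ≤ δ ^ 2 * ⟪Q y, y⟫ := fun y =>
    mul_nonneg (sq_nonneg δ) (isPos_inner_nonneg hQ y)
  have hSinner : ∀ y : Y, ⟪S y, y⟫ = ⟪Γ y, y⟫ + ⟪P y, y⟫ := by
    intro y; rw [hSdef]; simp [inner_add_left]
  have hTinner : ∀ y : Y, ⟪T y, y⟫ = ⟪Γ y, y⟫ + δ ^ 2 * ⟪Q y, y⟫ + ⟪P y, y⟫ := by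
    intro y; rw [hTdef]
    simp [inner_add_left, real_inner_smul_left]
  have hSpos : ∀ y : Y, y ≠ 0 → 0 < ⟪S y, y⟫ := by
    intro y hy
    rw [hSinner y]
    have := isPos_inner_nonneg hP y
    linarith [hΓpos y hy]
  have hTpos : ∀ y : Y, y ≠ 0 → 0 < ⟪T y, y⟫ := by
    intro y hy
    rw [hTinner y]
    have := isPos_inner_nonneg hP y
    linarith [hΓpos y hy, hQy y]
  have hST : ∀ y : Y, ⟪S y, y⟫ ≤ ⟪T y, y⟫ := by
    intro y
    rw [hSinner y, hTinner y]
    linarith [hQy y]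
  have hkey : ‖Ring.inverse T‖ ≤ ‖Ring.inverse S‖ :=
    inverse_norm_le hSpos' hSpos hTpos hST
  have hAdj : ‖adjoint A‖ = ‖A‖ := ContinuousLinearMap.adjoint.norm_map A
  calc ‖Kop A M C₀ Γ B δ‖
      = ‖C₀ ∘L ((adjoint A) ∘L Ring.inverse T)‖ := rfl
    _ ≤ ‖C₀‖ * ‖(adjoint A) ∘L Ring.inverse T‖ := opNorm_comp_le _ _
    _ ≤ ‖C₀‖ * (‖adjoint A‖ * ‖Ring.inverse T‖) :=
        mul_le_mul_of_nonneg_left (opNorm_comp_le _ _) (norm_nonneg _)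
    _ = ‖C₀‖ * (‖A‖ * ‖Ring.inverse T‖) := by rw [hAdj]
    _ ≤ ‖C₀‖ * (‖A‖ * ‖Ring.inverse S‖) := by
        exact mul_le_mul_of_nonneg_left
          (mul_le_mul_of_nonneg_left hkey (norm_nonneg _)) (norm_nonneg _)
    _ = ‖C₀‖ * ‖A‖ * ‖Ring.inverse S‖ := by ring
end

section
/- Fix δ ∈ ℝ and a bounded self-adjoint non-negative operator B : X → X. The map B' ↦ F(B',δ) = C₀ − C₀A*(Γ + δ²MB'M* + AC₀A*)⁻¹AC₀, defined on the open subset of the Banach space of bounded operators on X consisting of those B' for which Γ + δ²MB'M* + AC₀A* is invertible, is Fréchet differentiable at B, and its derivative is the bounded linear map V ↦ δ² K(B,δ) M V M* K(B,δ)*, where K(B,δ) = C₀A*(Γ + δ²MBM* + AC₀A*)⁻¹. -/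
open ContinuousLinearMap
open scoped RealInnerProductSpace

/-- The map `F(B,δ) = C₀ − C₀ A* (Γ + δ² M B M* + A C₀ A*)⁻¹ A C₀ = C₀ − K(B,δ) A C₀`. -/
noncomputable def Fop {X Y : Type*}
    [NormedAddCommGroup X] [InnerProductSpace ℝ X] [CompleteSpace X]
    [NormedAddCommGroup Y] [InnerProductSpace ℝ Y] [FiniteDimensional ℝ Y]
    (A M : X →L[ℝ] Y) (C₀ : X →L[ℝ] X) (Γ : Y →L[ℝ] Y)
    (B : X →L[ℝ] X) (δ : ℝ) : X →L[ℝ] X :=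
  C₀ - (Kop A M C₀ Γ B δ) ∘L A ∘L C₀

/-!
Write `S(B) = Γ + δ² M B M* + A C₀ A*` (`dataCov`), so that `F(B) = C₀ - C₀ A* S(B)⁻¹ A C₀`.
The map `S` is affine with linear part `V ↦ δ² M V M*`, and inversion has derivative `T ↦ -S⁻¹ T S⁻¹` at the
invertible `S(B)`; the chain rule gives `V ↦ δ² C₀ A* S(B)⁻¹ M V M* S(B)⁻¹ A C₀`. `S(B)` is
invertible because `⟪S(B) y, y⟫ ≥ ⟪Γ y, y⟫ > 0` on the finite-dimensional `Y`, and since `S(B)`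
and `C₀` are self-adjoint, `S(B)⁻¹ A C₀ = K(B,δ)*`.
-/

open Ring

theorem HasFDerivAt.ringInverse {𝕜 E R : Type*} [NontriviallyNormedField 𝕜]
    [NormedAddCommGroup E] [NormedSpace 𝕜 E] [NormedRing R] [NormedAlgebra 𝕜 R]
    [HasSummableGeomSeries R] {f : E → R} {f' : E →L[𝕜] R} {x : E}
    (hf : HasFDerivAt f f' x) (hx : IsUnit (f x)) :
    HasFDerivAt (fun y => (f y)⁻¹ʳ) (-(mulLeftRight 𝕜 R (f x)⁻¹ʳ (f x)⁻¹ʳ) ∘L f') x := by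
  obtain ⟨u, hu⟩ := hx
  have hinv := hasFDerivAt_ringInverse (𝕜 := 𝕜) u
  rw [← inverse_unit, hu] at hinv
  exact hinv.comp x hf

namespace ContinuousLinearMap

variable {𝕜 E F G H : Type*} [NontriviallyNormedField 𝕜]
  [NormedAddCommGroup E] [NormedSpace 𝕜 E] [NormedAddCommGroup F] [NormedSpace 𝕜 F]
  [NormedAddCommGroup G] [NormedSpace 𝕜 G] [NormedAddCommGroup H] [NormedSpace 𝕜 H]

noncomputable def compLeftRightL (S : G →L[𝕜] H) (R : E →L[𝕜] F) :
    (F →L[𝕜] G) →L[𝕜] (E →L[𝕜] H) :=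
  (compL 𝕜 E G H S).comp ((compL 𝕜 E F G).flip R)

@[simp]
theorem compLeftRightL_apply (S : G →L[𝕜] H) (R : E →L[𝕜] F) (T : F →L[𝕜] G) :
    compLeftRightL S R T = S ∘L T ∘L R :=
  rfl

theorem isUnit_of_forall_inner_self_pos {Y : Type*} [NormedAddCommGroup Y]
    [InnerProductSpace ℝ Y] [FiniteDimensional ℝ Y] {T : Y →L[ℝ] Y}
    (hT : ∀ y, y ≠ 0 → 0 < ⟪T y, y⟫) : IsUnit T := by
  have hinj : Function.Injective (T : Y →ₗ[ℝ] Y) := by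
    refine (injective_iff_map_eq_zero _).mpr fun y hy => ?_
    by_contra hne
    exact (hT y hne).ne' (by rw [show T y = 0 from hy, inner_zero_left])
  exact isUnit_iff_bijective.mpr ⟨hinj, LinearMap.injective_iff_surjective.mp hinj⟩

end ContinuousLinearMap

section

variable {X Y : Type*} [NormedAddCommGroup X] [InnerProductSpace ℝ X] [CompleteSpace X]
  [NormedAddCommGroup Y] [InnerProductSpace ℝ Y] [FiniteDimensional ℝ Y]
  (A M : X →L[ℝ] Y) (C₀ : X →L[ℝ] X) (Γ : Y →L[ℝ] Y) (δ : ℝ)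

noncomputable def dataCov (B : X →L[ℝ] X) : Y →L[ℝ] Y :=
  Γ + δ ^ 2 • compLeftRightL M (adjoint M) B + A ∘L C₀ ∘L adjoint A

theorem Kop_eq (B : X →L[ℝ] X) :
    Kop A M C₀ Γ B δ = C₀ ∘L adjoint A ∘L (dataCov A M C₀ Γ δ B)⁻¹ʳ :=
  rfl

theorem isSelfAdjoint_dataCov (hC₀ : IsSelfAdjoint C₀) (hΓ : IsSelfAdjoint Γ) {B : X →L[ℝ] X}
    (hB : IsSelfAdjoint B) : IsSelfAdjoint (dataCov A M C₀ Γ δ B) :=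
  (hΓ.add ((IsSelfAdjoint.all (δ ^ 2)).smul (hB.conj_adjoint M))).add (hC₀.conj_adjoint A)

theorem inner_dataCov_self_pos (hC₀ : C₀.IsPositive) (hΓ : ∀ y : Y, y ≠ 0 → 0 < ⟪Γ y, y⟫)
    {B : X →L[ℝ] X} (hB : B.IsPositive) {y : Y} (hy : y ≠ 0) :
    0 < ⟪dataCov A M C₀ Γ δ B y, y⟫ := by
  have hMBM := (hB.conj_adjoint M).smul_of_nonneg (sq_nonneg δ)
  simp only [dataCov, compLeftRightL_apply, add_apply, inner_add_left]
  linarith [hΓ y hy, hMBM.inner_nonneg_left y, (hC₀.conj_adjoint A).inner_nonneg_left y]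

theorem adjoint_Kop (hC₀ : IsSelfAdjoint C₀) {B : X →L[ℝ] X}
    (hS : IsSelfAdjoint (dataCov A M C₀ Γ δ B)) :
    adjoint (Kop A M C₀ Γ B δ) = (dataCov A M C₀ Γ δ B)⁻¹ʳ ∘L A ∘L C₀ := by
  rw [Kop_eq, adjoint_comp, adjoint_comp, adjoint_adjoint, hS.ringInverse.adjoint_eq,
    hC₀.adjoint_eq, comp_assoc]

theorem hasFDerivAt_dataCov (B : X →L[ℝ] X) :
    HasFDerivAt (dataCov A M C₀ Γ δ) (δ ^ 2 • compLeftRightL M (adjoint M)) B :=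
  (((compLeftRightL M (adjoint M)).hasFDerivAt.const_smul (δ ^ 2)).const_add Γ).add_const _

theorem hasFDerivAt_Fop {B : X →L[ℝ] X} (hS : IsUnit (dataCov A M C₀ Γ δ B)) :
    HasFDerivAt (fun B' => Fop A M C₀ Γ B' δ)
      (δ ^ 2 • compLeftRightL (Kop A M C₀ Γ B δ ∘L M)
        (adjoint M ∘L (dataCov A M C₀ Γ δ B)⁻¹ʳ ∘L A ∘L C₀)) B := by
  have hFop : (fun B' => Fop A M C₀ Γ B' δ) =
      fun B' => C₀ - compLeftRightL (C₀ ∘L adjoint A) (A ∘L C₀) (dataCov A M C₀ Γ δ B')⁻¹ʳ :=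
    rfl
  rw [hFop]
  refine ((((compLeftRightL (C₀ ∘L adjoint A) (A ∘L C₀)).hasFDerivAt).comp B
    ((hasFDerivAt_dataCov A M C₀ Γ δ B).ringInverse hS)).const_sub C₀).congr_fderiv ?_
  ext V x
  simp [Kop_eq]

end

/-- The map `B' ↦ F(B',δ)` is Fréchet differentiable at every bounded self-adjoint non-negative
`B`, with derivative the bounded linear map `V ↦ δ² K(B,δ) M V M* K(B,δ)*`. -/
theorem stmt_1 {X Y : Type*}
    [NormedAddCommGroup X] [InnerProductSpace ℝ X] [CompleteSpace X]
    [NormedAddCommGroup Y] [InnerProductSpace ℝ Y] [FiniteDimensional ℝ Y]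
    (A M : X →L[ℝ] Y) (C₀ : X →L[ℝ] X) (Γ : Y →L[ℝ] Y)
    (hC₀ : C₀.IsPositive) (hΓ : Γ.IsPositive)
    (hΓpos : ∀ y : Y, y ≠ 0 → 0 < ⟪Γ y, y⟫)
    (B : X →L[ℝ] X) (hB : B.IsPositive) (δ : ℝ) :
    ∃ D : (X →L[ℝ] X) →L[ℝ] (X →L[ℝ] X),
      (∀ V : X →L[ℝ] X,
        D V = δ ^ 2 •
          ((Kop A M C₀ Γ B δ) ∘L M ∘L V ∘L (adjoint M) ∘L adjoint (Kop A M C₀ Γ B δ))) ∧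
      HasFDerivAt (fun B' : X →L[ℝ] X => Fop A M C₀ Γ B' δ) D B := by
  have hS := isSelfAdjoint_dataCov A M C₀ Γ δ hC₀.isSelfAdjoint hΓ.isSelfAdjoint hB.isSelfAdjoint
  have hSunit : IsUnit (dataCov A M C₀ Γ δ B) :=
    isUnit_of_forall_inner_self_pos fun y hy => inner_dataCov_self_pos A M C₀ Γ δ hC₀ hΓpos hB hy
  refine ⟨_, fun V => ?_, hasFDerivAt_Fop A M C₀ Γ δ hSunit⟩
  simp [adjoint_Kop A M C₀ Γ δ hC₀.isSelfAdjoint hS, comp_assoc]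
end

section
/- For every δ ∈ ℝ and all bounded self-adjoint non-negative operators B₁, B₂ : X → X, the map B ↦ K(B,δ) = C₀A*(Γ + δ²MBM* + AC₀A*)⁻¹ satisfies the Lipschitz estimate ‖K(B₁,δ) − K(B₂,δ)‖ ≤ δ² ‖M‖² · ‖C₀‖·‖A‖·‖(Γ + AC₀A*)⁻¹‖² · ‖B₁ − B₂‖ in the operator norm. -/
/-!
By the second resolvent identity `T₁⁻¹ - T₂⁻¹ = T₁⁻¹ (T₂ - T₁) T₂⁻¹`, the estimate reduces to
`‖Tᵢ⁻¹‖ ≤ ‖S⁻¹‖` for `S = Γ + A C₀ A* ≤ Tᵢ = S + δ² M Bᵢ M*` in the Loewner order. This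
antitonicity of the inverse norm comes from the coercivity bound `‖y‖² ≤ ‖S⁻¹‖ ⟪S y, y⟫`, which is
Cauchy–Schwarz for the form `⟪S ·, ·⟫` applied to `y` and `S⁻¹ y`.
-/

open ContinuousLinearMap
open scoped RealInnerProductSpace

namespace ContinuousLinearMap

variable {E : Type*} [NormedAddCommGroup E] [InnerProductSpace ℝ E]

theorem IsPositive.inner_map_sq_le {S : E →L[ℝ] E} (hS : S.IsPositive) (u v : E) :
    ⟪S u, v⟫ ^ 2 ≤ ⟪S u, u⟫ * ⟪S v, v⟫ := by
  have hquad : ∀ t : ℝ, 0 ≤ ⟪S v, v⟫ * (t * t) + 2 * ⟪S u, v⟫ * t + ⟪S u, u⟫ := by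
    intro t
    have hvu : ⟪S v, u⟫ = ⟪S u, v⟫ := by
      rw [hS.inner_left_eq_inner_right, real_inner_comm]
    have := hS.inner_nonneg_left (u + t • v)
    simp only [map_add, map_smul, inner_add_left, inner_add_right, real_inner_smul_left,
      real_inner_smul_right, hvu] at this
    linarith
  have := discrim_le_zero hquad
  rw [discrim] at this
  nlinarith

theorem IsPositive.norm_sq_le_norm_inverse_mul_inner {S : E →L[ℝ] E} (hS : S.IsPositive)
    (hSu : IsUnit S) (y : E) : ‖y‖ ^ 2 ≤ ‖Ring.inverse S‖ * ⟪S y, y⟫ := by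
  set w := Ring.inverse S y
  have hSw : S w = y := by
    change (S * Ring.inverse S) y = y
    rw [Ring.mul_inverse_cancel _ hSu]; rfl
  have hcs := hS.inner_map_sq_le y w
  rw [hS.inner_left_eq_inner_right, hSw, real_inner_self_eq_norm_sq] at hcs
  have hw : ⟪y, w⟫ ≤ ‖Ring.inverse S‖ * ‖y‖ ^ 2 :=
    calc ⟪y, w⟫ ≤ ‖y‖ * ‖w‖ := real_inner_le_norm y w
      _ ≤ ‖y‖ * (‖Ring.inverse S‖ * ‖y‖) := by gcongr; exact le_opNorm _ _
      _ = ‖Ring.inverse S‖ * ‖y‖ ^ 2 := by ring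
  rcases (norm_nonneg y).eq_or_lt with hy | hy
  · rw [← hy, zero_pow two_ne_zero]
    exact mul_nonneg (norm_nonneg _) (hS.inner_nonneg_left y)
  · nlinarith [hS.inner_nonneg_left y, pow_pos hy 2]

theorem inner_map_le_of_le {S T : E →L[ℝ] E} (hST : S ≤ T) (x : E) : ⟪S x, x⟫ ≤ ⟪T x, x⟫ := by
  have := ((le_def S T).mp hST).inner_nonneg_left x
  rwa [sub_apply, inner_sub_left, sub_nonneg] at this

theorem IsPositive.isUnit_of_le [CompleteSpace E] {S T : E →L[ℝ] E} (hS : S.IsPositive)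
    (hSu : IsUnit S) (hST : S ≤ T) : IsUnit T := by
  rcases subsingleton_or_nontrivial E with hE | hE
  · exact isUnit_of_subsingleton T
  have hpos : 0 < ‖Ring.inverse S‖ := norm_pos_iff.mpr (hSu.ringInverse).ne_zero
  refine isUnit_of_forall_le_norm_inner_map T (c := ⟨‖Ring.inverse S‖⁻¹, by positivity⟩)
    (by exact_mod_cast inv_pos.mpr hpos) fun x => ?_
  calc ‖x‖ ^ 2 * ‖Ring.inverse S‖⁻¹ ≤ ⟪S x, x⟫ := by
        rw [mul_inv_le_iff₀ hpos, mul_comm]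
        exact hS.norm_sq_le_norm_inverse_mul_inner hSu x
    _ ≤ ⟪T x, x⟫ := inner_map_le_of_le hST x
    _ ≤ ‖⟪T x, x⟫‖ := Real.le_norm_self _

theorem IsPositive.norm_inverse_le_of_le {S T : E →L[ℝ] E} (hS : S.IsPositive)
    (hSu : IsUnit S) (hST : S ≤ T) : ‖Ring.inverse T‖ ≤ ‖Ring.inverse S‖ := by
  by_cases hTu : IsUnit T
  swap
  · simp [Ring.inverse_non_unit T hTu]
  refine opNorm_le_bound _ (norm_nonneg _) fun x => ?_
  set y := Ring.inverse T x
  have hTy : T y = x := by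
    change (T * Ring.inverse T) x = x
    rw [Ring.mul_inverse_cancel _ hTu]; rfl
  have hsq : ‖y‖ ^ 2 ≤ ‖Ring.inverse S‖ * (‖x‖ * ‖y‖) :=
    calc ‖y‖ ^ 2 ≤ ‖Ring.inverse S‖ * ⟪S y, y⟫ := hS.norm_sq_le_norm_inverse_mul_inner hSu y
      _ ≤ ‖Ring.inverse S‖ * ⟪T y, y⟫ := by gcongr; exact inner_map_le_of_le hST y
      _ ≤ ‖Ring.inverse S‖ * (‖x‖ * ‖y‖) := by
        gcongr; rw [hTy]; exact real_inner_le_norm x y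
  rcases (norm_nonneg y).eq_or_lt with hy | hy
  · rw [← hy]; positivity
  · nlinarith

theorem IsPositive.norm_inverse_sub_inverse_le [CompleteSpace E] {S T₁ T₂ : E →L[ℝ] E}
    (hS : S.IsPositive) (hSu : IsUnit S) (h₁ : S ≤ T₁) (h₂ : S ≤ T₂) :
    ‖Ring.inverse T₁ - Ring.inverse T₂‖ ≤ ‖Ring.inverse S‖ ^ 2 * ‖T₁ - T₂‖ := by
  have hunits : IsUnit T₁ ↔ IsUnit T₂ :=
    iff_of_true (hS.isUnit_of_le hSu h₁) (hS.isUnit_of_le hSu h₂)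
  rw [Ring.inverse_sub_inverse hunits, ← norm_neg (T₁ - T₂), neg_sub]
  calc ‖Ring.inverse T₁ * (T₂ - T₁) * Ring.inverse T₂‖
      ≤ ‖Ring.inverse T₁‖ * ‖T₂ - T₁‖ * ‖Ring.inverse T₂‖ := norm_mul₃_le
    _ ≤ ‖Ring.inverse S‖ * ‖T₂ - T₁‖ * ‖Ring.inverse S‖ := by
      gcongr
      exacts [hS.norm_inverse_le_of_le hSu h₁, hS.norm_inverse_le_of_le hSu h₂]
    _ = ‖Ring.inverse S‖ ^ 2 * ‖T₂ - T₁‖ := by ring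

theorem isUnit_of_forall_inner_map_pos [FiniteDimensional ℝ E] {T : E →L[ℝ] E}
    (hT : ∀ x : E, x ≠ 0 → 0 < ⟪T x, x⟫) : IsUnit T := by
  have hinj : Function.Injective T := by
    refine (injective_iff_map_eq_zero T).mpr fun x hx => ?_
    by_contra hx0
    simpa [hx] using hT x hx0
  exact isUnit_iff_bijective.mpr
    ⟨hinj, (LinearMap.injective_iff_surjective (f := (T : E →ₗ[ℝ] E))).mp hinj⟩

end ContinuousLinearMap

theorem ContinuousLinearMap.norm_comp_comp_adjoint_le {X Y : Type*}
    [NormedAddCommGroup X] [InnerProductSpace ℝ X] [CompleteSpace X]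
    [NormedAddCommGroup Y] [InnerProductSpace ℝ Y] [CompleteSpace Y]
    (M : X →L[ℝ] Y) (B : X →L[ℝ] X) : ‖M ∘L B ∘L adjoint M‖ ≤ ‖M‖ ^ 2 * ‖B‖ :=
  calc ‖M ∘L B ∘L adjoint M‖ ≤ ‖M‖ * (‖B‖ * ‖adjoint M‖) :=
        (opNorm_comp_le _ _).trans (by gcongr; exact opNorm_comp_le _ _)
    _ = ‖M‖ ^ 2 * ‖B‖ := by rw [LinearIsometryEquiv.norm_map]; ring

/-- Lipschitz estimate for `B ↦ K(B,δ)`: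
`‖K(B₁,δ) − K(B₂,δ)‖ ≤ δ²‖M‖²·‖C₀‖·‖A‖·‖(Γ + A C₀ A*)⁻¹‖²·‖B₁ − B₂‖`. -/
theorem stmt_5 {X Y : Type*}
    [NormedAddCommGroup X] [InnerProductSpace ℝ X] [CompleteSpace X]
    [NormedAddCommGroup Y] [InnerProductSpace ℝ Y] [FiniteDimensional ℝ Y]
    (A M : X →L[ℝ] Y) (C₀ : X →L[ℝ] X) (Γ : Y →L[ℝ] Y)
    (hC₀ : C₀.IsPositive) (hΓ : Γ.IsPositive)
    (hΓpos : ∀ y : Y, y ≠ 0 → 0 < ⟪Γ y, y⟫)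
    (δ : ℝ) (B₁ B₂ : X →L[ℝ] X) (hB₁ : B₁.IsPositive) (hB₂ : B₂.IsPositive) :
    ‖Kop A M C₀ Γ B₁ δ - Kop A M C₀ Γ B₂ δ‖ ≤
      δ ^ 2 * ‖M‖ ^ 2 * (‖C₀‖ * ‖A‖ *
        ‖Ring.inverse (Γ + A ∘L C₀ ∘L adjoint A)‖ ^ 2) * ‖B₁ - B₂‖ := by
  set S := Γ + A ∘L C₀ ∘L adjoint A
  set T := fun B : X →L[ℝ] X => Γ + δ ^ 2 • (M ∘L B ∘L adjoint M) + A ∘L C₀ ∘L adjoint A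
  have hACA : (A ∘L C₀ ∘L adjoint A).IsPositive := hC₀.conj_adjoint A
  have hS : S.IsPositive := hΓ.add hACA
  have hSu : IsUnit S := isUnit_of_forall_inner_map_pos fun y hy => by
    simpa only [S, add_apply, inner_add_left] using
      add_pos_of_pos_of_nonneg (hΓpos y hy) (hACA.inner_nonneg_left y)
  have hST : ∀ B : X →L[ℝ] X, B.IsPositive → S ≤ T B := fun B hB => by
    rw [le_def, show T B - S = δ ^ 2 • (M ∘L B ∘L adjoint M) by simp only [T, S]; abel]
    exact (hB.conj_adjoint M).smul_of_nonneg (sq_nonneg δ)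
  have hT : T B₁ - T B₂ = δ ^ 2 • (M ∘L (B₁ - B₂) ∘L adjoint M) := by
    simp only [T, comp_sub, sub_comp, smul_sub]; abel
  have hK : Kop A M C₀ Γ B₁ δ - Kop A M C₀ Γ B₂ δ
      = C₀ ∘L adjoint A ∘L (Ring.inverse (T B₁) - Ring.inverse (T B₂)) := by
    simp only [Kop, T, comp_sub]
  calc ‖Kop A M C₀ Γ B₁ δ - Kop A M C₀ Γ B₂ δ‖
      ≤ ‖C₀‖ * (‖adjoint A‖ * ‖Ring.inverse (T B₁) - Ring.inverse (T B₂)‖) := by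
        rw [hK]; exact (opNorm_comp_le _ _).trans (by gcongr; exact opNorm_comp_le _ _)
    _ ≤ ‖C₀‖ * (‖A‖ * (‖Ring.inverse S‖ ^ 2 * (δ ^ 2 * (‖M‖ ^ 2 * ‖B₁ - B₂‖)))) := by
        rw [LinearIsometryEquiv.norm_map]
        gcongr
        refine (hS.norm_inverse_sub_inverse_le hSu (hST B₁ hB₁) (hST B₂ hB₂)).trans ?_
        rw [hT, norm_smul, Real.norm_of_nonneg (sq_nonneg δ)]
        gcongr
        exact norm_comp_comp_adjoint_le M (B₁ - B₂)
    _ = _ := by ring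
end

section
/- Let K_max = ‖C₀‖·‖A‖·‖(Γ + AC₀A*)⁻¹‖, β = K_max·‖M‖, L = ‖m₀‖ + K_max·‖b − Am₀‖, and suppose 0 ≤ δ < 1/β. Define the covariance iterates C₀(δ) = C₀, C_{ℓ+1}(δ) = F(C_ℓ(δ),δ) and the mean iterates m₀(δ) = m₀, m_{ℓ+1}(δ) = m₀ + K(C_ℓ(δ),δ)(b − Am₀ − δ M m_ℓ(δ)). Then for every ℓ ≥ 0, ‖m_ℓ(δ)‖ ≤ (βδ)^ℓ ‖m₀‖ + L/(1 − βδ); in particular the sequence of means is uniformly bounded. -/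
/-!
The gains `K(C_ℓ, δ)` are bounded by `K_max` uniformly in `ℓ`. The covariances `C_ℓ` stay
positive, since the update `C₀ - C₀ A* Q⁻¹ A C₀` is a Schur complement and `A C₀ A* ≤ Q`.
Hence `Q = Γ + δ² M C_ℓ M* + A C₀ A*` dominates `Γ + A C₀ A*` in the Loewner order, and
`P ↦ ‖P⁻¹‖` is antitone on positive invertible operators (Cauchy–Schwarz for `⟪P ·, ·⟫`).
This gives `‖m_{ℓ+1}‖ ≤ L + βδ ‖m_ℓ‖`, and unrolling this affine recursion gives the bound.
-/

open ContinuousLinearMap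
open scoped RealInnerProductSpace

/-- The covariance iterates `C₀(δ) = C₀`, `C_{ℓ+1}(δ) = F(C_ℓ(δ),δ)`. -/
noncomputable def covIter {X Y : Type*}
    [NormedAddCommGroup X] [InnerProductSpace ℝ X] [CompleteSpace X]
    [NormedAddCommGroup Y] [InnerProductSpace ℝ Y] [FiniteDimensional ℝ Y]
    (A M : X →L[ℝ] Y) (C₀ : X →L[ℝ] X) (Γ : Y →L[ℝ] Y) (δ : ℝ) : ℕ → (X →L[ℝ] X)
  | 0 => C₀
  | (n + 1) => Fop A M C₀ Γ (covIter A M C₀ Γ δ n) δ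

/-- The mean iterates `m₀(δ) = m₀`, `m_{ℓ+1}(δ) = m₀ + K(C_ℓ(δ),δ)(b − A m₀ − δ M m_ℓ(δ))`. -/
noncomputable def meanIter {X Y : Type*}
    [NormedAddCommGroup X] [InnerProductSpace ℝ X] [CompleteSpace X]
    [NormedAddCommGroup Y] [InnerProductSpace ℝ Y] [FiniteDimensional ℝ Y]
    (A M : X →L[ℝ] Y) (C₀ : X →L[ℝ] X) (Γ : Y →L[ℝ] Y)
    (m₀ : X) (b : Y) (δ : ℝ) : ℕ → X
  | 0 => m₀
  | (n + 1) => m₀ + (Kop A M C₀ Γ (covIter A M C₀ Γ δ n) δ)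
      (b - A m₀ - δ • M (meanIter A M C₀ Γ m₀ b δ n))

namespace ContinuousLinearMap

section InnerProductSpace

variable {E : Type*} [NormedAddCommGroup E] [InnerProductSpace ℝ E]

theorem IsPositive.inner_sq_le {T : E →L[ℝ] E} (hT : T.IsPositive) (x y : E) :
    ⟪T x, y⟫ ^ 2 ≤ ⟪T x, x⟫ * ⟪T y, y⟫ := by
  have hquad : ∀ t : ℝ, 0 ≤ ⟪T y, y⟫ * (t * t) + 2 * ⟪T x, y⟫ * t + ⟪T x, x⟫ := by
    intro t
    have h := hT.inner_nonneg_left (x + t • y)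
    have hsymm : ⟪T y, x⟫ = ⟪T x, y⟫ := by
      rw [hT.inner_left_eq_inner_right, real_inner_comm]
    simp only [map_add, map_smul, inner_add_left, inner_add_right, real_inner_smul_left,
      real_inner_smul_right, hsymm] at h
    linarith
  have := discrim_le_zero hquad
  rw [discrim] at this
  linarith

theorem apply_ringInverse_apply {P : E →L[ℝ] E} (hP : IsUnit P) (x : E) :
    P (Ring.inverse P x) = x := by
  rw [← mul_apply_eq_comp, Ring.mul_inverse_cancel P hP, one_apply_eq_self]

theorem IsPositive.norm_sq_le_norm_ringInverse_mul_inner {P : E →L[ℝ] E} (hP : P.IsPositive)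
    (hU : IsUnit P) (x : E) : ‖x‖ ^ 2 ≤ ‖Ring.inverse P‖ * ⟪P x, x⟫ := by
  set z := Ring.inverse P x
  have hz : P z = x := apply_ringInverse_apply hU x
  have hxz : ⟪P x, z⟫ = ‖x‖ ^ 2 := by
    rw [hP.inner_left_eq_inner_right, hz, real_inner_self_eq_norm_sq]
  have hzz : ⟪P z, z⟫ ≤ ‖Ring.inverse P‖ * ‖x‖ ^ 2 :=
    calc ⟪P z, z⟫ = ⟪x, z⟫ := by rw [hz]
      _ ≤ ‖x‖ * ‖z‖ := real_inner_le_norm x z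
      _ ≤ ‖x‖ * (‖Ring.inverse P‖ * ‖x‖) := by gcongr; exact le_opNorm _ x
      _ = ‖Ring.inverse P‖ * ‖x‖ ^ 2 := by ring
  have hcs : (‖x‖ ^ 2) ^ 2 ≤ ⟪P x, x⟫ * (‖Ring.inverse P‖ * ‖x‖ ^ 2) :=
    calc (‖x‖ ^ 2) ^ 2 = ⟪P x, z⟫ ^ 2 := by rw [hxz]
      _ ≤ ⟪P x, x⟫ * ⟪P z, z⟫ := hP.inner_sq_le x z
      _ ≤ ⟪P x, x⟫ * (‖Ring.inverse P‖ * ‖x‖ ^ 2) :=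
        mul_le_mul_of_nonneg_left hzz (hP.inner_nonneg_left x)
  rcases (sq_nonneg ‖x‖).eq_or_lt with hx | hx
  · rw [← hx]; exact mul_nonneg (norm_nonneg _) (hP.inner_nonneg_left x)
  · nlinarith

theorem norm_ringInverse_le_of_le {P Q : E →L[ℝ] E} (hP : P.IsPositive) (hPQ : P ≤ Q)
    (hPU : IsUnit P) (hQU : IsUnit Q) : ‖Ring.inverse Q‖ ≤ ‖Ring.inverse P‖ := by
  refine opNorm_le_bound _ (norm_nonneg _) fun y => ?_
  set x := Ring.inverse Q y
  have hx : Q x = y := apply_ringInverse_apply hQU y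
  have hPQx : ⟪P x, x⟫ ≤ ⟪Q x, x⟫ := by
    have := hPQ.inner_nonneg_left x
    rwa [sub_apply, inner_sub_left, sub_nonneg] at this
  have key : ‖x‖ ^ 2 ≤ ‖Ring.inverse P‖ * ‖y‖ * ‖x‖ :=
    calc ‖x‖ ^ 2 ≤ ‖Ring.inverse P‖ * ⟪P x, x⟫ := hP.norm_sq_le_norm_ringInverse_mul_inner hPU x
      _ ≤ ‖Ring.inverse P‖ * ⟪y, x⟫ := by rw [← hx]; gcongr
      _ ≤ ‖Ring.inverse P‖ * (‖y‖ * ‖x‖) := by gcongr; exact real_inner_le_norm y x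
      _ = ‖Ring.inverse P‖ * ‖y‖ * ‖x‖ := by ring
  rcases (norm_nonneg x).eq_or_lt with hx0 | hx0
  · rw [← hx0]; positivity
  · nlinarith

theorem isUnit_of_inner_pos [FiniteDimensional ℝ E] {Q : E →L[ℝ] E}
    (hQ : ∀ y, y ≠ 0 → 0 < ⟪Q y, y⟫) : IsUnit Q := by
  have hinj : Function.Injective Q := by
    refine (injective_iff_map_eq_zero Q).2 fun y hy => ?_
    by_contra hy0
    simpa [hy] using hQ y hy0
  exact isUnit_iff_bijective.2
    ⟨hinj, LinearMap.injective_iff_surjective (f := (Q : E →ₗ[ℝ] E)) |>.1 hinj⟩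

theorem isUnit_add_of_inner_pos [FiniteDimensional ℝ E] {Γ S : E →L[ℝ] E}
    (hΓ : ∀ y, y ≠ 0 → 0 < ⟪Γ y, y⟫) (hS : S.IsPositive) : IsUnit (Γ + S) :=
  isUnit_of_inner_pos fun y hy => by
    rw [add_apply, inner_add_left]
    exact add_pos_of_pos_of_nonneg (hΓ y hy) (hS.inner_nonneg_left y)

end InnerProductSpace

section Hilbert

variable {E F : Type*} [NormedAddCommGroup E] [InnerProductSpace ℝ E] [CompleteSpace E]
  [NormedAddCommGroup F] [InnerProductSpace ℝ F] [CompleteSpace F]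

theorem IsPositive.inner_ringInverse_conj_le {C : E →L[ℝ] E} (hC : C.IsPositive)
    (T : E →L[ℝ] F) {Q : F →L[ℝ] F} (hQ : IsUnit Q) (hle : T ∘L C ∘L adjoint T ≤ Q) (x : E) :
    ⟪Ring.inverse Q (T (C x)), T (C x)⟫ ≤ ⟪C x, x⟫ := by
  set y := T (C x)
  set z := Ring.inverse Q y
  have hz : Q z = y := apply_ringInverse_apply hQ y
  have hCz : ⟪C (adjoint T z), adjoint T z⟫ ≤ ⟪z, y⟫ := by
    have hQz := hle.inner_nonneg_left z
    rw [sub_apply, inner_sub_left, sub_nonneg] at hQz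
    calc ⟪C (adjoint T z), adjoint T z⟫ = ⟪(T ∘L C ∘L adjoint T) z, z⟫ := adjoint_inner_right _ _ _
      _ ≤ ⟪Q z, z⟫ := hQz
      _ = ⟪z, y⟫ := by rw [hz, real_inner_comm]
  have hsq : ⟪z, y⟫ ^ 2 ≤ ⟪C x, x⟫ * ⟪z, y⟫ :=
    calc ⟪z, y⟫ ^ 2 = ⟪C x, adjoint T z⟫ ^ 2 := by rw [adjoint_inner_right, real_inner_comm]
      _ ≤ ⟪C x, x⟫ * ⟪C (adjoint T z), adjoint T z⟫ := hC.inner_sq_le _ _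
      _ ≤ ⟪C x, x⟫ * ⟪z, y⟫ := mul_le_mul_of_nonneg_left hCz (hC.inner_nonneg_left x)
  nlinarith [hC.inner_nonneg_left x, (hC.inner_nonneg_left (adjoint T z)).trans hCz]

theorem IsPositive.sub_comp_ringInverse_comp {C : E →L[ℝ] E} (hC : C.IsPositive)
    (T : E →L[ℝ] F) {Q : F →L[ℝ] F} (hQ : IsUnit Q) (hle : T ∘L C ∘L adjoint T ≤ Q) :
    (C - (C ∘L adjoint T ∘L Ring.inverse Q) ∘L T ∘L C).IsPositive := by
  have hQpos : Q.IsPositive := by simpa using (hC.conj_adjoint T).add hle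
  have hR : IsSelfAdjoint (Ring.inverse Q) := by
    rw [IsSelfAdjoint, ← Ring.inverse_star, hQpos.isSelfAdjoint.star_eq]
  have hconj : (C ∘L adjoint T ∘L Ring.inverse Q) ∘L T ∘L C
      = (C ∘L adjoint T) ∘L Ring.inverse Q ∘L adjoint (C ∘L adjoint T) := by
    simp only [adjoint_comp, adjoint_adjoint, hC.isSelfAdjoint.adjoint_eq, comp_assoc]
  refine (isPositive_iff' _).2 ⟨?_, fun x => ?_⟩
  · rw [hconj]
    exact hC.isSelfAdjoint.sub (hR.conj_adjoint _)
  · rw [sub_apply, inner_sub_left, sub_nonneg]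
    calc ⟪((C ∘L adjoint T ∘L Ring.inverse Q) ∘L T ∘L C) x, x⟫
        = ⟪Ring.inverse Q (T (C x)), T (C x)⟫ := by
          simp only [comp_apply]
          rw [hC.inner_left_eq_inner_right, adjoint_inner_left]
      _ ≤ ⟪C x, x⟫ := hC.inner_ringInverse_conj_le T hQ hle x

end Hilbert

end ContinuousLinearMap

section KalmanIteration

variable {X Y : Type*}
    [NormedAddCommGroup X] [InnerProductSpace ℝ X] [CompleteSpace X]
    [NormedAddCommGroup Y] [InnerProductSpace ℝ Y] [FiniteDimensional ℝ Y]
    {A M : X →L[ℝ] Y} {C₀ : X →L[ℝ] X} {Γ : Y →L[ℝ] Y}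

theorem isUnit_add_smul_conj_add_conj (hC₀ : C₀.IsPositive)
    (hΓpos : ∀ y : Y, y ≠ 0 → 0 < ⟪Γ y, y⟫) {B : X →L[ℝ] X} (hB : B.IsPositive) (δ : ℝ) :
    IsUnit (Γ + δ ^ 2 • (M ∘L B ∘L adjoint M) + A ∘L C₀ ∘L adjoint A) := by
  rw [add_assoc]
  exact isUnit_add_of_inner_pos hΓpos
    (((hB.conj_adjoint M).smul_of_nonneg (sq_nonneg δ)).add (hC₀.conj_adjoint A))

theorem norm_Kop_le (hC₀ : C₀.IsPositive) (hΓ : Γ.IsPositive)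
    (hΓpos : ∀ y : Y, y ≠ 0 → 0 < ⟪Γ y, y⟫) {B : X →L[ℝ] X} (hB : B.IsPositive) (δ : ℝ) :
    ‖Kop A M C₀ Γ B δ‖ ≤ ‖C₀‖ * ‖A‖ * ‖Ring.inverse (Γ + A ∘L C₀ ∘L adjoint A)‖ := by
  have hS : (δ ^ 2 • (M ∘L B ∘L adjoint M)).IsPositive :=
    (hB.conj_adjoint M).smul_of_nonneg (sq_nonneg δ)
  have hP : (A ∘L C₀ ∘L adjoint A).IsPositive := hC₀.conj_adjoint A
  have hle : Γ + A ∘L C₀ ∘L adjoint A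
      ≤ Γ + δ ^ 2 • (M ∘L B ∘L adjoint M) + A ∘L C₀ ∘L adjoint A := by
    rw [le_def]
    convert hS using 1
    abel
  have hinv := norm_ringInverse_le_of_le (hΓ.add hP) hle (isUnit_add_of_inner_pos hΓpos hP)
    (isUnit_add_smul_conj_add_conj hC₀ hΓpos hB δ)
  calc ‖Kop A M C₀ Γ B δ‖
      ≤ ‖C₀‖ * (‖adjoint A‖ *
          ‖Ring.inverse (Γ + δ ^ 2 • (M ∘L B ∘L adjoint M) + A ∘L C₀ ∘L adjoint A)‖) :=
        (opNorm_comp_le _ _).trans (by gcongr; exact opNorm_comp_le _ _)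
    _ ≤ ‖C₀‖ * ‖A‖ * ‖Ring.inverse (Γ + A ∘L C₀ ∘L adjoint A)‖ := by
        rw [adjoint.norm_map, ← mul_assoc]
        gcongr

theorem Fop_isPositive (hC₀ : C₀.IsPositive) (hΓ : Γ.IsPositive)
    (hΓpos : ∀ y : Y, y ≠ 0 → 0 < ⟪Γ y, y⟫) {B : X →L[ℝ] X} (hB : B.IsPositive) (δ : ℝ) :
    (Fop A M C₀ Γ B δ).IsPositive := by
  have hS : (δ ^ 2 • (M ∘L B ∘L adjoint M)).IsPositive :=
    (hB.conj_adjoint M).smul_of_nonneg (sq_nonneg δ)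
  have hle : A ∘L C₀ ∘L adjoint A
      ≤ Γ + δ ^ 2 • (M ∘L B ∘L adjoint M) + A ∘L C₀ ∘L adjoint A := by
    rw [le_def]
    convert hΓ.add hS using 1
    abel
  exact hC₀.sub_comp_ringInverse_comp A (isUnit_add_smul_conj_add_conj hC₀ hΓpos hB δ) hle

theorem covIter_isPositive (hC₀ : C₀.IsPositive) (hΓ : Γ.IsPositive)
    (hΓpos : ∀ y : Y, y ≠ 0 → 0 < ⟪Γ y, y⟫) (δ : ℝ) (n : ℕ) :
    (covIter A M C₀ Γ δ n).IsPositive := by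
  induction n with
  | zero => exact hC₀
  | succ n ih => exact Fop_isPositive hC₀ hΓ hΓpos ih δ

theorem norm_meanIter_succ_le {m₀ : X} {b : Y} {δ κ : ℝ} {n : ℕ}
    (hK : ‖Kop A M C₀ Γ (covIter A M C₀ Γ δ n) δ‖ ≤ κ) (hδ : 0 ≤ δ) :
    ‖meanIter A M C₀ Γ m₀ b δ (n + 1)‖
      ≤ ‖m₀‖ + κ * ‖b - A m₀‖ + κ * ‖M‖ * δ * ‖meanIter A M C₀ Γ m₀ b δ n‖ := by
  set m := meanIter A M C₀ Γ m₀ b δ n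
  have hκ : 0 ≤ κ := (norm_nonneg _).trans hK
  have hv : ‖b - A m₀ - δ • M m‖ ≤ ‖b - A m₀‖ + δ * (‖M‖ * ‖m‖) := by
    refine (norm_sub_le _ _).trans ?_
    rw [norm_smul_of_nonneg hδ]
    gcongr
    exact le_opNorm M m
  calc ‖meanIter A M C₀ Γ m₀ b δ (n + 1)‖
      = ‖m₀ + Kop A M C₀ Γ (covIter A M C₀ Γ δ n) δ (b - A m₀ - δ • M m)‖ := rfl
    _ ≤ ‖m₀‖ + κ * (‖b - A m₀‖ + δ * (‖M‖ * ‖m‖)) :=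
        norm_add_le_of_le le_rfl (le_of_opNorm_le _ hK _ |>.trans (by gcongr))
    _ = ‖m₀‖ + κ * ‖b - A m₀‖ + κ * ‖M‖ * δ * ‖m‖ := by ring

end KalmanIteration

theorem le_pow_mul_add_div_of_le_add_mul {u : ℕ → ℝ} {L q : ℝ} (hq0 : 0 ≤ q) (hq1 : q < 1)
    (hL : 0 ≤ L) (hu : ∀ n, u (n + 1) ≤ L + q * u n) (n : ℕ) :
    u n ≤ q ^ n * u 0 + L / (1 - q) := by
  have hq : 0 < 1 - q := sub_pos.2 hq1
  induction n with
  | zero => simpa using div_nonneg hL hq.le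
  | succ n ih =>
    calc u (n + 1) ≤ L + q * u n := hu n
      _ ≤ L + q * (q ^ n * u 0 + L / (1 - q)) := by gcongr
      _ = q ^ (n + 1) * u 0 + L / (1 - q) := by field_simp; ring

/-- With `K_max = ‖C₀‖·‖A‖·‖(Γ + A C₀ A*)⁻¹‖`, `β = K_max·‖M‖`, `L = ‖m₀‖ + K_max·‖b − A m₀‖`
and `0 ≤ δ < 1/β`, the mean iterates satisfy `‖m_ℓ(δ)‖ ≤ (βδ)^ℓ ‖m₀‖ + L/(1 − βδ)` for all
`ℓ ≥ 0`; in particular they are uniformly bounded. -/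
theorem stmt_6 {X Y : Type*}
    [NormedAddCommGroup X] [InnerProductSpace ℝ X] [CompleteSpace X]
    [NormedAddCommGroup Y] [InnerProductSpace ℝ Y] [FiniteDimensional ℝ Y]
    (A M : X →L[ℝ] Y) (C₀ : X →L[ℝ] X) (Γ : Y →L[ℝ] Y)
    (m₀ : X) (b : Y)
    (hC₀ : C₀.IsPositive) (hΓ : Γ.IsPositive)
    (hΓpos : ∀ y : Y, y ≠ 0 → 0 < ⟪Γ y, y⟫)
    (Kmax β L : ℝ)
    (hK : Kmax = ‖C₀‖ * ‖A‖ * ‖Ring.inverse (Γ + A ∘L C₀ ∘L adjoint A)‖)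
    (hβ : β = Kmax * ‖M‖)
    (hL : L = ‖m₀‖ + Kmax * ‖b - A m₀‖)
    (δ : ℝ) (hδ0 : 0 ≤ δ) (hδ1 : β * δ < 1) :
    ∀ ℓ : ℕ, ‖meanIter A M C₀ Γ m₀ b δ ℓ‖ ≤ (β * δ) ^ ℓ * ‖m₀‖ + L / (1 - β * δ) := by
  subst hK hβ hL
  refine le_pow_mul_add_div_of_le_add_mul (by positivity) hδ1 (by positivity) fun n => ?_
  have hKop := norm_Kop_le (A := A) (M := M) hC₀ hΓ hΓpos
    (covIter_isPositive (A := A) (M := M) hC₀ hΓ hΓpos δ n) δ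
  exact (norm_meanIter_succ_le hKop hδ0).trans_eq (by ring)
end

section
/- Assume κ ≤ π_noise(ε) ≤ κ⁻¹ for all ε ∈ ℝ^J, where κ ∈ (0,1). Then for all finite Borel measures μ, ν on ℝⁿ, d(Pμ, Pν) ≤ κ⁻¹ d(μ, ν), where d(μ,ν) = sup{|∫φ dμ − ∫φ dν| : φ : ℝⁿ → ℝ bounded measurable with sup|φ| ≤ 1}. (The proof exhibits, for each such φ, a bounded measurable ψ with sup|ψ| ≤ κ⁻¹ such that (Pμ)(φ) = μ(ψ) for every finite measure μ.) -/
open MeasureTheory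

/-- The map `P` of the iterative model-error algorithm:
`(Pμ)(du) = (∫ π_noise(b − f(u) − M(z)) μ(dz)) · π_prior(u) du`. -/
noncomputable def Pmeas {n J : ℕ}
    (πprior : (Fin n → ℝ) → ℝ) (πnoise : (Fin J → ℝ) → ℝ)
    (f M : (Fin n → ℝ) → (Fin J → ℝ)) (b : Fin J → ℝ)
    (μ : Measure (Fin n → ℝ)) : Measure (Fin n → ℝ) :=
  (volume : Measure (Fin n → ℝ)).withDensity
    (fun u => ENNReal.ofReal ((∫ z, πnoise (b - f u - M z) ∂μ) * πprior u))

/-- The distance `d(μ,ν) = sup {|μ(φ) − ν(φ)| : φ bounded measurable, sup|φ| ≤ 1}`. -/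
noncomputable def dmeas {α : Type*} [MeasurableSpace α] (μ ν : Measure α) : ℝ :=
  sSup {r : ℝ | ∃ φ : α → ℝ, Measurable φ ∧ (∀ x, |φ x| ≤ 1) ∧
    r = |(∫ x, φ x ∂μ) - ∫ x, φ x ∂ν|}

/-! By Fubini, integrating a test function `φ` against `Pμ` is the same as integrating
`ψ(z) = ∫ φ(u) π_noise(b − f(u) − M(z)) π_prior(u) du` against `μ`. Since `π_noise ≤ κ⁻¹` and
`π_prior` is a probability density, `|ψ| ≤ κ⁻¹`, so `κψ` is again an admissible test function
and `|Pμ(φ) − Pν(φ)| = κ⁻¹ |μ(κψ) − ν(κψ)| ≤ κ⁻¹ d(μ, ν)`. -/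

open Function

section dmeas

variable {α β : Type*} [MeasurableSpace α] [MeasurableSpace β]
  {μ ν : Measure α} [IsFiniteMeasure μ] [IsFiniteMeasure ν]

lemma abs_integral_sub_integral_le_dmeas {φ : α → ℝ} (hφ : Measurable φ)
    (hφ1 : ∀ x, |φ x| ≤ 1) : |(∫ x, φ x ∂μ) - ∫ x, φ x ∂ν| ≤ dmeas μ ν := by
  refine le_csSup ⟨μ.real Set.univ + ν.real Set.univ, ?_⟩ ⟨φ, hφ, hφ1, rfl⟩
  rintro _ ⟨φ, -, hφ1, rfl⟩
  have hφ1 : ∀ x, ‖φ x‖ ≤ 1 := hφ1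
  have hμ := norm_integral_le_of_norm_le_const (μ := μ) (ae_of_all _ hφ1)
  have hν := norm_integral_le_of_norm_le_const (μ := ν) (ae_of_all _ hφ1)
  rw [one_mul] at hμ hν
  exact (abs_sub _ _).trans (add_le_add hμ hν)

lemma dmeas_nonneg : 0 ≤ dmeas μ ν := by
  simpa using abs_integral_sub_integral_le_dmeas (μ := μ) (ν := ν) (φ := fun _ => 0)
    measurable_const (by simp)

lemma abs_integral_sub_integral_le_mul_dmeas {C : ℝ} (hC : 0 ≤ C) {ψ : α → ℝ}
    (hψ : Measurable ψ) (hψC : ∀ x, |ψ x| ≤ C) :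
    |(∫ x, ψ x ∂μ) - ∫ x, ψ x ∂ν| ≤ C * dmeas μ ν := by
  rcases hC.eq_or_lt with rfl | hC
  · simp [fun x => abs_nonpos_iff.1 (hψC x)]
  have h := abs_integral_sub_integral_le_dmeas (μ := μ) (ν := ν) (φ := fun x => C⁻¹ * ψ x)
    (hψ.const_mul _) fun x => by
      rw [abs_mul, abs_of_pos (inv_pos.2 hC), inv_mul_le_iff₀ hC, mul_one]
      exact hψC x
  rwa [integral_const_mul, integral_const_mul, ← mul_sub, abs_mul, abs_of_pos (inv_pos.2 hC),
    inv_mul_le_iff₀ hC] at h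

lemma dmeas_le_mul_dmeas_of_forall_exists {C : ℝ} (hC : 0 ≤ C) {μ' ν' : Measure β}
    (h : ∀ φ : β → ℝ, Measurable φ → (∀ x, |φ x| ≤ 1) → ∃ ψ : α → ℝ, Measurable ψ ∧
      (∀ x, |ψ x| ≤ C) ∧ ∫ x, φ x ∂μ' = ∫ x, ψ x ∂μ ∧ ∫ x, φ x ∂ν' = ∫ x, ψ x ∂ν) :
    dmeas μ' ν' ≤ C * dmeas μ ν := by
  refine Real.sSup_le ?_ (mul_nonneg hC dmeas_nonneg)
  rintro _ ⟨φ, hφ, hφ1, rfl⟩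
  obtain ⟨ψ, hψ, hψC, hμ, hν⟩ := h φ hφ hφ1
  rw [hμ, hν]
  exact abs_integral_sub_integral_le_mul_dmeas hC hψ hψC

end dmeas

lemma norm_mul_kernel_mul_density_le {α β : Type*} {p φ : α → ℝ} {k : α → β → ℝ} {C : ℝ}
    (hφ1 : ∀ u, |φ u| ≤ 1) (hk0 : ∀ u z, 0 ≤ k u z)
    (hkC : ∀ u z, k u z ≤ C) (hp0 : ∀ u, 0 ≤ p u) (u : α) (z : β) :
    ‖φ u * (k u z * p u)‖ ≤ C * p u := by
  rw [Real.norm_eq_abs, abs_mul, abs_of_nonneg (mul_nonneg (hk0 u z) (hp0 u))]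
  calc |φ u| * (k u z * p u) ≤ 1 * (k u z * p u) :=
      mul_le_mul_of_nonneg_right (hφ1 u) (mul_nonneg (hk0 u z) (hp0 u))
    _ ≤ C * p u := by rw [one_mul]; exact mul_le_mul_of_nonneg_right (hkC u z) (hp0 u)

section kernel

variable {α β : Type*} [MeasurableSpace α] [MeasurableSpace β] {ρ : Measure α}
  {p φ : α → ℝ} {k : α → β → ℝ} {C : ℝ}

lemma integral_withDensity_kernel_mul_density [SFinite ρ] (μ : Measure β) [IsFiniteMeasure μ]
    (hp : Measurable p) (hp0 : ∀ u, 0 ≤ p u) (hpi : Integrable p ρ)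
    (hk : Measurable (uncurry k)) (hk0 : ∀ u z, 0 ≤ k u z) (hkC : ∀ u z, k u z ≤ C)
    (hφ : Measurable φ) (hφ1 : ∀ u, |φ u| ≤ 1) :
    ∫ u, φ u ∂ρ.withDensity (fun u => ENNReal.ofReal ((∫ z, k u z ∂μ) * p u)) =
      ∫ z, ∫ u, φ u * (k u z * p u) ∂ρ ∂μ := by
  have hdensity : Measurable fun u => ENNReal.ofReal ((∫ z, k u z ∂μ) * p u) :=
    (hk.stronglyMeasurable.integral_prod_right'.measurable.mul hp).ennreal_ofReal
  have hfubini : Integrable (uncurry fun u z => φ u * (k u z * p u)) (ρ.prod μ) :=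
    ((hpi.comp_fst μ).const_mul C).mono'
      ((hφ.comp measurable_fst).mul (hk.mul (hp.comp measurable_fst))).aestronglyMeasurable
      (ae_of_all _ fun x => norm_mul_kernel_mul_density_le hφ1 hk0 hkC hp0 x.1 x.2)
  rw [integral_withDensity_eq_integral_toReal_smul hdensity (ae_of_all _ fun _ => ENNReal.ofReal_lt_top), ← integral_integral_swap hfubini]
  congr with u
  rw [ENNReal.toReal_ofReal (mul_nonneg (integral_nonneg (hk0 u)) (hp0 u)), smul_eq_mul,
    integral_const_mul, integral_mul_const, mul_comm]

lemma exists_integral_withDensity_kernel_mul_density_eq [SFinite ρ]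
    (hp : Measurable p) (hp0 : ∀ u, 0 ≤ p u) (hpi : Integrable p ρ)
    (hk : Measurable (uncurry k)) (hk0 : ∀ u z, 0 ≤ k u z) (hkC : ∀ u z, k u z ≤ C)
    (hφ : Measurable φ) (hφ1 : ∀ u, |φ u| ≤ 1) :
    ∃ ψ : β → ℝ, Measurable ψ ∧ (∀ z, |ψ z| ≤ C * ∫ u, p u ∂ρ) ∧
      ∀ (μ : Measure β) [IsFiniteMeasure μ],
        ∫ u, φ u ∂ρ.withDensity (fun u => ENNReal.ofReal ((∫ z, k u z ∂μ) * p u)) =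
          ∫ z, ψ z ∂μ := by
  refine ⟨fun z => ∫ u, φ u * (k u z * p u) ∂ρ, ?_, fun z => ?_, fun μ _ =>
    integral_withDensity_kernel_mul_density μ hp hp0 hpi hk hk0 hkC hφ hφ1⟩
  · exact ((hφ.comp measurable_fst).mul
      (hk.mul (hp.comp measurable_fst))).stronglyMeasurable.integral_prod_left'.measurable
  · exact (norm_integral_le_of_norm_le (hpi.const_mul C) (ae_of_all _ fun u =>
      norm_mul_kernel_mul_density_le hφ1 hk0 hkC hp0 u z)).trans_eq (integral_const_mul C p)

end kernel

theorem stmt_15_general {n J : ℕ} (κ : ℝ) (hκ0 : 0 < κ)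
    (πprior : (Fin n → ℝ) → ℝ) (hprior_meas : Measurable πprior)
    (hprior_nonneg : ∀ u, 0 ≤ πprior u)
    (hprior_int : ∫⁻ u, ENNReal.ofReal (πprior u) = 1)
    (πnoise : (Fin J → ℝ) → ℝ) (hnoise_meas : Measurable πnoise)
    (hnoise_bnd : ∀ ε, κ ≤ πnoise ε ∧ πnoise ε ≤ κ⁻¹)
    (f M : (Fin n → ℝ) → (Fin J → ℝ)) (hf : Measurable f) (hM : Measurable M)
    (b : Fin J → ℝ)
    (μ ν : Measure (Fin n → ℝ)) [IsFiniteMeasure μ] [IsFiniteMeasure ν] :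
    dmeas (Pmeas πprior πnoise f M b μ) (Pmeas πprior πnoise f M b ν) ≤
      κ⁻¹ * dmeas μ ν := by
  have hprior_integrable : Integrable πprior := ⟨hprior_meas.aestronglyMeasurable, by
    rw [hasFiniteIntegral_iff_ofReal (ae_of_all _ hprior_nonneg), hprior_int]
    exact ENNReal.one_lt_top⟩
  have hprior_integral : ∫ u, πprior u = 1 := by
    rw [integral_eq_lintegral_of_nonneg_ae (ae_of_all _ hprior_nonneg)
      hprior_meas.aestronglyMeasurable, hprior_int, ENNReal.toReal_one]
  have hkernel : Measurable (uncurry fun u z => πnoise (b - f u - M z)) :=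
    hnoise_meas.comp ((measurable_const.sub (hf.comp measurable_fst)).sub
      (hM.comp measurable_snd))
  refine dmeas_le_mul_dmeas_of_forall_exists (inv_nonneg.2 hκ0.le) fun φ hφ hφ1 => ?_
  obtain ⟨ψ, hψ, hψκ, hψφ⟩ := exists_integral_withDensity_kernel_mul_density_eq
    hprior_meas hprior_nonneg hprior_integrable hkernel
    (fun _ _ => hκ0.le.trans (hnoise_bnd _).1) (fun _ _ => (hnoise_bnd _).2) hφ hφ1
  rw [hprior_integral, mul_one] at hψκ
  exact ⟨ψ, hψ, hψκ, hψφ μ, hψφ ν⟩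

/-- If `κ ≤ π_noise(ε) ≤ κ⁻¹` for all `ε`, with `κ ∈ (0,1)`, then for all finite Borel measures
`μ, ν` on `ℝⁿ`, `d(Pμ, Pν) ≤ κ⁻¹ d(μ, ν)`. -/
theorem stmt_15 {n J : ℕ} (κ : ℝ) (hκ0 : 0 < κ) (hκ1 : κ < 1)
    (πprior : (Fin n → ℝ) → ℝ) (hprior_meas : Measurable πprior)
    (hprior_nonneg : ∀ u, 0 ≤ πprior u)
    (hprior_int : ∫⁻ u, ENNReal.ofReal (πprior u) = 1)
    (πnoise : (Fin J → ℝ) → ℝ) (hnoise_meas : Measurable πnoise)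
    (hnoise_bnd : ∀ ε, κ ≤ πnoise ε ∧ πnoise ε ≤ κ⁻¹)
    (f M : (Fin n → ℝ) → (Fin J → ℝ)) (hf : Measurable f) (hM : Measurable M)
    (b : Fin J → ℝ)
    (μ ν : Measure (Fin n → ℝ)) [IsFiniteMeasure μ] [IsFiniteMeasure ν] :
    dmeas (Pmeas πprior πnoise f M b μ) (Pmeas πprior πnoise f M b ν) ≤
      κ⁻¹ * dmeas μ ν :=
  stmt_15_general κ hκ0 πprior hprior_meas hprior_nonneg hprior_int πnoise hnoise_meas hnoise_bnd f
    M hf hM b μ ν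
end
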